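/- arXiv:1401.2444 — 9 statements merged into one kernel-verified Lean document; each statement's English description precedes it below -/
import Mathlib

section
/- Let n = 2m with m ≥ 1, and let C be a SYM∘SYM circuit on n Boolean inputs with s bottom gates given by wire multiplicities c : Fin s → Fin n → ℕ, bottom symmetric predicates g : Fin s → ℕ → Bool, and a top symmetric predicate F : ℕ → Bool; on input x : Fin n → Bool the circuit outputs C(x) = F(card {j : Fin s | g j (∑ i, c j i * (if x i then 1 else 0)) = true}). Let t = ∑ j, ∑ i, c j i be the total number of wires. Then the 2^m × 2^m truth table matrix of C, defined by M (y, z) = C(y ⧺ z) for y, z : Fin m → Bool, has symmetric rank at most s·(t+1)²: there exist r ≤ s·(t+1)², Boolean matrices A : (Fin m → Bool) → Fin r → Bool and B : Fin r → (Fin m → Bool) → Bool, and a function f : ℕ → Bool such that for all y, z : Fin m → Bool, M (y, z) = f(∑ k : Fin r, (if A y k then 1 else 0) * (if B k z then 1 else 0)). -/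
/-- The truth table matrix of a SYM∘SYM circuit with `s` bottom gates and
`t` total wires has symmetric rank at most `s * (t+1)^2`. -/
theorem symSymCircuit_symmetricRank_le
    (m s : ℕ) (hm : 1 ≤ m)
    (c : Fin s → Fin (m + m) → ℕ)
    (g : Fin s → ℕ → Bool)
    (F : ℕ → Bool) :
    ∃ r : ℕ, r ≤ s * ((∑ j : Fin s, ∑ i : Fin (m + m), c j i) + 1) ^ 2 ∧
      ∃ (A : (Fin m → Bool) → Fin r → Bool) (B : Fin r → (Fin m → Bool) → Bool)
        (f : ℕ → Bool),
        ∀ y z : Fin m → Bool,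
          F ((Finset.univ.filter (fun j : Fin s =>
              g j (∑ i : Fin (m + m),
                c j i * (if Fin.append y z i then 1 else 0)) = true)).card)
          = f (∑ k : Fin r,
              (if A y k then 1 else 0) * (if B k z then 1 else 0)) := by
  classical
  set t := ∑ j : Fin s, ∑ i : Fin (m + m), c j i with ht
  set u : Fin s → (Fin m → Bool) → ℕ :=
    fun j y => ∑ i : Fin m, c j (Fin.castAdd m i) * (if y i then 1 else 0) with hu
  set v : Fin s → (Fin m → Bool) → ℕ :=
    fun j z => ∑ i : Fin m, c j (Fin.natAdd m i) * (if z i then 1 else 0) with hv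
  have hub : ∀ j y, u j y ≤ t := by
    intro j y
    calc u j y ≤ ∑ i : Fin m, c j (Fin.castAdd m i) :=
          Finset.sum_le_sum (fun i _ => by split_ifs <;> simp)
      _ ≤ ∑ i : Fin (m + m), c j i := by
          rw [Fin.sum_univ_add]; exact Nat.le_add_right _ _
      _ ≤ t := Finset.single_le_sum (f := fun j => ∑ i : Fin (m + m), c j i)
          (fun _ _ => Nat.zero_le _) (Finset.mem_univ j)
  have hvb : ∀ j z, v j z ≤ t := by
    intro j z
    calc v j z ≤ ∑ i : Fin m, c j (Fin.natAdd m i) :=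
          Finset.sum_le_sum (fun i _ => by split_ifs <;> simp)
      _ ≤ ∑ i : Fin (m + m), c j i := by
          rw [Fin.sum_univ_add]; exact Nat.le_add_left _ _
      _ ≤ t := Finset.single_le_sum (f := fun j => ∑ i : Fin (m + m), c j i)
          (fun _ _ => Nat.zero_le _) (Finset.mem_univ j)
  refine ⟨s * ((t + 1) * (t + 1)), by rw [sq], ?_⟩
  let e : Fin s × Fin (t + 1) × Fin (t + 1) ≃ Fin (s * ((t + 1) * (t + 1))) :=
    (Equiv.prodCongr (Equiv.refl _) finProdFinEquiv).trans finProdFinEquiv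
  refine ⟨fun y k => decide (u (e.symm k).1 y = ((e.symm k).2.1 : ℕ) ∧
      g (e.symm k).1 (((e.symm k).2.1 : ℕ) + ((e.symm k).2.2 : ℕ)) = true),
    fun k z => decide (v (e.symm k).1 z = ((e.symm k).2.2 : ℕ)), F, ?_⟩
  intro y z
  congr 1
  have hsplit : ∀ j, (∑ i : Fin (m + m), c j i * (if Fin.append y z i then 1 else 0))
      = u j y + v j z := by
    intro j
    rw [Fin.sum_univ_add]
    congr 1
    · exact Finset.sum_congr rfl fun i _ => by rw [Fin.append_left]
    · exact Finset.sum_congr rfl fun i _ => by rw [Fin.append_right]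
  rw [← Equiv.sum_comp e]
  simp only [Equiv.symm_apply_apply, decide_eq_true_iff]
  rw [Fintype.sum_prod_type]
  have key : ∀ j : Fin s,
      (∑ p : Fin (t + 1) × Fin (t + 1),
        (if (u j y = (p.1 : ℕ) ∧ g j ((p.1 : ℕ) + (p.2 : ℕ)) = true) then 1 else 0) *
        (if v j z = (p.2 : ℕ) then 1 else 0))
      = if g j (u j y + v j z) = true then 1 else 0 := by
    intro j
    rw [Finset.sum_eq_single (⟨⟨u j y, Nat.lt_succ_of_le (hub j y)⟩,
        ⟨v j z, Nat.lt_succ_of_le (hvb j z)⟩⟩ : Fin (t + 1) × Fin (t + 1))]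
    · simp
    · intro p _ hp
      rcases p with ⟨a, b⟩
      by_cases h1 : u j y = (a : ℕ)
      · by_cases h2 : v j z = (b : ℕ)
        · exfalso; apply hp; ext
          · exact h1.symm
          · exact h2.symm
        · simp [h2]
      · simp [h1]
    · intro h; exact absurd (Finset.mem_univ _) h
  calc (Finset.univ.filter (fun j : Fin s =>
        g j (∑ i : Fin (m + m), c j i * (if Fin.append y z i then 1 else 0)) = true)).card
      = ∑ j : Fin s, if g j (u j y + v j z) = true then 1 else 0 := by
        rw [Finset.card_filter]
        exact Finset.sum_congr rfl (fun j _ => by rw [hsplit j])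
    _ = ∑ j : Fin s, ∑ p : Fin (t + 1) × Fin (t + 1),
        (if (u j y = (p.1 : ℕ) ∧ g j ((p.1 : ℕ) + (p.2 : ℕ)) = true) then 1 else 0) *
        (if v j z = (p.2 : ℕ) then 1 else 0) := by
        exact Finset.sum_congr rfl (fun j _ => (key j).symm)
end

section
/- Let t ≥ 1 and n ≥ 1, let f : Fin t → ℕ → Bool be symmetric predicates and c : Fin t → Fin n → ℕ be wire multiplicities, and set B = 1 + max over i : Fin t of ∑ j, c i j. Then there exists a single symmetric predicate g : ℕ → Bool such that for every x : Fin n → Bool: (∀ i : Fin t, f i (∑ j, c i j * (if x j then 1 else 0)) = true) ↔ g (∑ j, (∑ i, B^(i:ℕ) * c i j) * (if x j then 1 else 0)) = true. Moreover the total number of new wires satisfies ∑ j, ∑ i, B^(i:ℕ) * c i j ≤ B^(t+1). -/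
/-! The `t` wire counts `w i ≤ ∑ j, c i j < B` are base-`B` digits, so the new gate's count
`∑ i, B ^ i * w i` determines each `w i` as its `i`-th digit; the new gate tests every `f i` on
its digit. The same expansion applied to the digits `∑ j, c i j` bounds the number of wires by
`B ^ t`. -/

namespace Nat

variable {B : ℕ}

theorem sum_pow_mul_fin_succ {t : ℕ} (d : Fin (t + 1) → ℕ) :
    ∑ i : Fin (t + 1), B ^ (i : ℕ) * d i =
      d 0 + B * ∑ i : Fin t, B ^ (i : ℕ) * d i.succ := by
  rw [Fin.sum_univ_succ, Finset.mul_sum]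
  simp only [Fin.val_zero, pow_zero, one_mul, Fin.val_succ, pow_succ]
  exact congrArg _ (Finset.sum_congr rfl fun _ _ => by ring)

theorem sum_pow_mul_lt_pow {t : ℕ} {d : Fin t → ℕ} (hd : ∀ i, d i < B) :
    ∑ i : Fin t, B ^ (i : ℕ) * d i < B ^ t := by
  induction t with
  | zero => simp
  | succ t ih =>
    have hS : ∑ i : Fin t, B ^ (i : ℕ) * d i.succ + 1 ≤ B ^ t := ih fun i => hd i.succ
    have h0 : d 0 + 1 ≤ B := hd 0
    rw [sum_pow_mul_fin_succ, pow_succ]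
    nlinarith

theorem sum_pow_mul_div_pow_mod {t : ℕ} {d : Fin t → ℕ} (hd : ∀ i, d i < B) (k : Fin t) :
    (∑ i : Fin t, B ^ (i : ℕ) * d i) / B ^ (k : ℕ) % B = d k := by
  induction t with
  | zero => exact k.elim0
  | succ t ih =>
    have hB : 0 < B := (Nat.zero_le _).trans_lt (hd 0)
    rw [sum_pow_mul_fin_succ]
    induction k using Fin.cases with
    | zero => simpa using Nat.mod_eq_of_lt (hd 0)
    | succ k =>
      rw [Fin.val_succ, pow_succ', ← Nat.div_div_eq_div_mul, Nat.add_mul_div_left _ _ hB,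
        Nat.div_eq_of_lt (hd 0), zero_add]
      exact ih (fun i => hd i.succ) k

end Nat

theorem sum_sum_pow_mul_mul_eq {t n : ℕ} (B : ℕ) (c : Fin t → Fin n → ℕ)
    (y : Fin n → ℕ) :
    ∑ j, (∑ i : Fin t, B ^ (i : ℕ) * c i j) * y j =
      ∑ i : Fin t, B ^ (i : ℕ) * ∑ j, c i j * y j := by
  simp only [Finset.sum_mul, Finset.mul_sum, mul_assoc]
  exact Finset.sum_comm

theorem and_of_sym_collapse_general
    (t n : ℕ)
    (f : Fin t → ℕ → Bool)
    (c : Fin t → Fin n → ℕ) :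
    let B : ℕ := 1 + Finset.univ.sup (fun i : Fin t => ∑ j : Fin n, c i j)
    ∃ g : ℕ → Bool,
      (∀ x : Fin n → Bool,
        (∀ i : Fin t,
            f i (∑ j : Fin n, c i j * (if x j then 1 else 0)) = true) ↔
          g (∑ j : Fin n,
              (∑ i : Fin t, B ^ (i : ℕ) * c i j) * (if x j then 1 else 0)) = true) ∧
      ∑ j : Fin n, ∑ i : Fin t, B ^ (i : ℕ) * c i j ≤ B ^ (t + 1) := by
  intro B
  have hfanin : ∀ i, ∑ j, c i j < B := fun i =>
    Nat.lt_one_add_iff.mpr (Finset.le_sup (f := fun i => ∑ j, c i j) (Finset.mem_univ i))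
  refine ⟨fun m => decide (∀ i : Fin t, f i (m / B ^ (i : ℕ) % B) = true), fun x => ?_, ?_⟩
  · have hcount : ∀ i, ∑ j, c i j * (if x j then 1 else 0) < B := fun i =>
      (Finset.sum_le_sum fun j _ => mul_le_of_le_one_right' (by split <;> simp)).trans_lt
        (hfanin i)
    simp only [sum_sum_pow_mul_mul_eq, Nat.sum_pow_mul_div_pow_mod hcount, decide_eq_true_eq]
  · have hwires := sum_sum_pow_mul_mul_eq B c 1
    simp only [Pi.one_apply, mul_one] at hwires
    rw [hwires]
    exact (Nat.sum_pow_mul_lt_pow hfanin).le.trans (Nat.pow_le_pow_right (by omega) (by omega))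

/-- An AND of `t` symmetric gates collapses to a single symmetric gate via
base-`B` encoding of the individual wire counts, with at most `B^(t+1)` total new wires. -/
theorem and_of_sym_collapse
    (t n : ℕ) (ht : 1 ≤ t) (hn : 1 ≤ n)
    (f : Fin t → ℕ → Bool)
    (c : Fin t → Fin n → ℕ) :
    let B : ℕ := 1 + Finset.univ.sup (fun i : Fin t => ∑ j : Fin n, c i j)
    ∃ g : ℕ → Bool,
      (∀ x : Fin n → Bool,
        (∀ i : Fin t,
            f i (∑ j : Fin n, c i j * (if x j then 1 else 0)) = true) ↔
          g (∑ j : Fin n,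
              (∑ i : Fin t, B ^ (i : ℕ) * c i j) * (if x j then 1 else 0)) = true) ∧
      ∑ j : Fin n, ∑ i : Fin t, B ^ (i : ℕ) * c i j ≤ B ^ (t + 1) :=
  and_of_sym_collapse_general t n f c
end

section
/- Let m ≥ 1 and b : Fin m → ZMod 2, and for r₁, r₂ : Fin m → ZMod 2 define E(r₁, r₂) = ⟨r₁,b⟩ + ⟨r₂,b⟩ + ⟨r₁,b⟩·⟨r₂,b⟩ in ZMod 2, where ⟨r,b⟩ = ∑ i, r i * b i. If b = 0 then E(r₁, r₂) = 0 for all r₁, r₂. If b ≠ 0, then the number of pairs (r₁, r₂) ∈ (Fin m → ZMod 2) × (Fin m → ZMod 2) with E(r₁, r₂) = 1 is exactly 3 · 4^(m−1). -/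
/-!
Over GF(2) the expression `x + y + x * y` is the OR of `x` and `y`, so `E(r₁, r₂) ≠ 1` exactly
when both `r₁` and `r₂` lie in the kernel of the nonzero functional `r ↦ ⟨r, b⟩`. That kernel is a
hyperplane, of size `2 ^ (m - 1)`, so `E = 1` on `4 ^ m - 4 ^ (m - 1) = 3 · 4 ^ (m - 1)` pairs.
-/

open Finset Matrix

theorem Module.Dual.natCard_ker_mul_natCard_of_ne_zero {K V : Type*} [Field K] [Finite K]
    [AddCommGroup V] [Module K V] [Module.Finite K V] {f : Module.Dual K V} (hf : f ≠ 0) :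
    Nat.card (LinearMap.ker f) * Nat.card K = Nat.card V := by
  rw [Module.natCard_eq_pow_finrank (K := K), Module.natCard_eq_pow_finrank (K := K) (V := V),
    ← f.finrank_ker_add_one_of_ne_zero hf, pow_succ]

theorem card_filter_dotProduct_eq_zero_mul_card {K ι : Type*} [Field K] [Fintype K]
    [DecidableEq K] [Fintype ι] [DecidableEq ι] {b : ι → K} (hb : b ≠ 0) :
    #{r : ι → K | r ⬝ᵥ b = 0} * Fintype.card K = Fintype.card K ^ Fintype.card ι := by
  have hf : dotProductEquiv K ι b ≠ 0 := (dotProductEquiv K ι).map_ne_zero_iff.mpr hb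
  have := Module.Dual.natCard_ker_mul_natCard_of_ne_zero hf
  simpa only [Nat.card_eq_fintype_card, Fintype.card_subtype, LinearMap.mem_ker,
    dotProductEquiv_apply_apply, dotProduct_comm b, Fintype.card_fun] using this

theorem ZMod.add_add_mul_eq_one_iff (x y : ZMod 2) : x + y + x * y = 1 ↔ ¬(x = 0 ∧ y = 0) := by
  decide +revert

theorem razborov_smolensky_or_general (m : ℕ) (b : Fin m → ZMod 2) :
    let ip : (Fin m → ZMod 2) → ZMod 2 := fun r => ∑ i, r i * b i
    let E : (Fin m → ZMod 2) → (Fin m → ZMod 2) → ZMod 2 :=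
      fun r₁ r₂ => ip r₁ + ip r₂ + ip r₁ * ip r₂
    (b = 0 → ∀ r₁ r₂, E r₁ r₂ = 0) ∧
    (b ≠ 0 →
      (Finset.univ.filter
        (fun p : (Fin m → ZMod 2) × (Fin m → ZMod 2) => E p.1 p.2 = 1)).card
        = 3 * 4 ^ (m - 1)) := by
  intro ip E
  refine ⟨fun hb r₁ r₂ => by simp [E, ip, hb], fun hb => ?_⟩
  set ker : Finset (Fin m → ZMod 2) := {r | r ⬝ᵥ b = 0}
  have hE : univ.filter (fun p : (Fin m → ZMod 2) × (Fin m → ZMod 2) => E p.1 p.2 = 1)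
      = (ker ×ˢ ker)ᶜ := by
    ext p
    simp only [E, ip, ker, ZMod.add_add_mul_eq_one_iff, mem_filter, mem_univ, true_and,
      mem_compl, mem_product]
    rfl
  obtain ⟨n, rfl⟩ : ∃ n, m = n + 1 :=
    Nat.exists_eq_add_one_of_ne_zero (by rintro rfl; exact hb (Subsingleton.elim _ _))
  have hker : #ker = 2 ^ n := by
    have : #ker * 2 = 2 ^ n * 2 := by
      simpa only [ZMod.card, Fintype.card_fin, pow_succ] using
        card_filter_dotProduct_eq_zero_mul_card hb
    omega
  rw [hE, card_compl, card_product, hker, Fintype.card_prod, Fintype.card_fun, ZMod.card,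
    Fintype.card_fin, ← mul_pow, ← mul_pow, Nat.add_sub_cancel, pow_succ]
  simp only [Nat.reduceMul]
  omega

/-- Razborov–Smolensky simulation of OR by two random XORs: if `b ≠ 0`,
the expression `⟨r₁,b⟩ + ⟨r₂,b⟩ + ⟨r₁,b⟩·⟨r₂,b⟩` over GF(2) equals 1 for exactly
`3 · 4^(m-1)` of the `4^m` pairs `(r₁, r₂)`. -/
theorem razborov_smolensky_or (m : ℕ) (hm : 1 ≤ m) (b : Fin m → ZMod 2) :
    let ip : (Fin m → ZMod 2) → ZMod 2 := fun r => ∑ i, r i * b i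
    let E : (Fin m → ZMod 2) → (Fin m → ZMod 2) → ZMod 2 :=
      fun r₁ r₂ => ip r₁ + ip r₂ + ip r₁ * ip r₂
    (b = 0 → ∀ r₁ r₂, E r₁ r₂ = 0) ∧
    (b ≠ 0 →
      (Finset.univ.filter
        (fun p : (Fin m → ZMod 2) × (Fin m → ZMod 2) => E p.1 p.2 = 1)).card
        = 3 * 4 ^ (m - 1)) :=
  razborov_smolensky_or_general m b
end

section
/- Let n ≥ 1 and X, Y : Fin n → ℤ. Then there exist functions ρX, ρY : Fin n → Fin (2n) such that for all i, j : Fin n, X i ≤ Y j if and only if (ρX i : ℕ) ≤ (ρY j : ℕ). -/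
/-- rank replacement: the entries of `X` and `Y` can be replaced by ranks
in `{0, …, 2n−1}` preserving all cross comparisons `X i ≤ Y j`. -/
theorem rank_replacement (n : ℕ) (hn : 1 ≤ n) (X Y : Fin n → ℤ) :
    ∃ (ρX ρY : Fin n → Fin (2 * n)),
      ∀ i j : Fin n, X i ≤ Y j ↔ (ρX i : ℕ) ≤ (ρY j : ℕ) := by
  classical
  refine ⟨fun i => ⟨(Finset.univ.filter (fun k => X k < X i)).card +
      (Finset.univ.filter (fun k => Y k < X i)).card, ?_⟩,
    fun j => ⟨(Finset.univ.filter (fun k => X k ≤ Y j)).card +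
      (Finset.univ.filter (fun k => Y k < Y j)).card, ?_⟩, ?_⟩
  · have h1 : (Finset.univ.filter (fun k => X k < X i)).card < n := by
      have := Finset.card_lt_card (show Finset.univ.filter (fun k => X k < X i) ⊂ Finset.univ
        from Finset.filter_ssubset.mpr ⟨i, Finset.mem_univ i, lt_irrefl _⟩)
      simpa using this
    have h2 : (Finset.univ.filter (fun k => Y k < X i)).card ≤ n := by
      simpa using Finset.card_le_card (Finset.filter_subset _ (Finset.univ : Finset (Fin n)))
    omega
  · have h1 : (Finset.univ.filter (fun k => X k ≤ Y j)).card ≤ n := by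
      simpa using Finset.card_le_card (Finset.filter_subset _ (Finset.univ : Finset (Fin n)))
    have h2 : (Finset.univ.filter (fun k => Y k < Y j)).card < n := by
      have := Finset.card_lt_card (show Finset.univ.filter (fun k => Y k < Y j) ⊂ Finset.univ
        from Finset.filter_ssubset.mpr ⟨j, Finset.mem_univ j, lt_irrefl _⟩)
      simpa using this
    omega
  · intro i j
    constructor
    · intro h
      have h1 : (Finset.univ.filter (fun k => X k < X i)).card ≤
          (Finset.univ.filter (fun k => X k ≤ Y j)).card := by
        apply Finset.card_le_card
        intro k hk
        simp only [Finset.mem_filter, Finset.mem_univ, true_and] at hk ⊢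
        exact hk.le.trans h
      have h2 : (Finset.univ.filter (fun k => Y k < X i)).card ≤
          (Finset.univ.filter (fun k => Y k < Y j)).card := by
        apply Finset.card_le_card
        intro k hk
        simp only [Finset.mem_filter, Finset.mem_univ, true_and] at hk ⊢
        exact lt_of_lt_of_le hk h
      simpa using Nat.add_le_add h1 h2
    · intro h
      by_contra hc
      push_neg at hc
      have h1 : (Finset.univ.filter (fun k => X k ≤ Y j)).card ≤
          (Finset.univ.filter (fun k => X k < X i)).card := by
        apply Finset.card_le_card
        intro k hk
        simp only [Finset.mem_filter, Finset.mem_univ, true_and] at hk ⊢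
        exact lt_of_le_of_lt hk hc
      have h2 : (Finset.univ.filter (fun k => Y k < Y j)).card <
          (Finset.univ.filter (fun k => Y k < X i)).card := by
        apply Finset.card_lt_card
        constructor
        · intro k hk
          simp only [Finset.mem_filter, Finset.mem_univ, true_and] at hk ⊢
          exact hk.trans hc
        · intro hsub
          have := hsub (by simp [hc] : j ∈ Finset.univ.filter (fun k => Y k < X i))
          simp at this
      simp only at h
      omega
end

section
/- Work in the ring S = (ℤ[a₁₁,a₁₂,a₁₃,a₂₂,a₂₃,b₁₁,b₁₂,b₂₁,b₃₁,c₁₁,c₁₂,c₂₁,c₂₂])[x] of univariate polynomials in x over the multivariate polynomial ring in 13 variables over ℤ. There exist, for ℓ = 1,…,5, elements α_ℓ, β_ℓ, γ_ℓ ∈ S and P ∈ S such that each α_ℓ is a linear combination of the variables a₁₁,a₁₂,a₁₃,a₂₂,a₂₃ with coefficients in ℤ[x] of degree at most 2, each β_ℓ is such a linear combination of b₁₁,b₁₂,b₂₁,b₃₁, each γ_ℓ is such a linear combination of c₁₁,c₁₂,c₂₁,c₂₂, and ∑_{ℓ=1}^{5} α_ℓ·β_ℓ·γ_ℓ = x²·(a₁₁b₁₁c₁₁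 + a₁₁b₁₂c₂₁ + a₁₂b₂₁c₁₁ + a₁₃b₃₁c₁₁ + a₂₂b₂₁c₁₂ + a₂₃b₃₁c₁₂) + x³·P. -/
open Polynomial

namespace CoppersmithBase

/-- The 13 variables: 0..4 ↦ a₁₁,a₁₂,a₁₃,a₂₂,a₂₃; 5..8 ↦ b₁₁,b₁₂,b₂₁,b₃₁;
9..12 ↦ c₁₁,c₁₂,c₂₁,c₂₂. -/
abbrev R : Type := MvPolynomial (Fin 13) ℤ

/-- The ring S = (ℤ[a,b,c-variables])[x]. -/
abbrev S : Type := Polynomial R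

noncomputable def a11 : R := MvPolynomial.X 0
noncomputable def a12 : R := MvPolynomial.X 1
noncomputable def a13 : R := MvPolynomial.X 2
noncomputable def a22 : R := MvPolynomial.X 3
noncomputable def a23 : R := MvPolynomial.X 4
noncomputable def b11 : R := MvPolynomial.X 5
noncomputable def b12 : R := MvPolynomial.X 6
noncomputable def b21 : R := MvPolynomial.X 7
noncomputable def b31 : R := MvPolynomial.X 8
noncomputable def c11 : R := MvPolynomial.X 9
noncomputable def c12 : R := MvPolynomial.X 10
noncomputable def c21 : R := MvPolynomial.X 11
noncomputable def c22 : R := MvPolynomial.X 12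

/-- The a-variables, b-variables, c-variables. -/
noncomputable def aVar : Fin 5 → R := ![a11, a12, a13, a22, a23]
noncomputable def bVar : Fin 4 → R := ![b11, b12, b21, b31]
noncomputable def cVar : Fin 4 → R := ![c11, c12, c21, c22]

/-- Embedding of ℤ[x] into S. -/
noncomputable def emb (p : Polynomial ℤ) : S := p.map (MvPolynomial.C : ℤ →+* R)

private lemma aux_deg : ((1 : Polynomial ℤ) - Polynomial.X).degree ≤ 2 :=
  le_trans (Polynomial.degree_sub_le _ _)
    (by rw [Polynomial.degree_one, Polynomial.degree_X]; norm_num)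

set_option maxHeartbeats 2000000 in
/-- Coppersmith's base identity: there are five products of linear forms
(with coefficients in ℤ[x] of degree ≤ 2) in the a-, b- and c-variables whose sum equals
`x² · (trilinear form of the partial 2×3 by 3×2 product) + x³ · P`. -/
theorem coppersmith_border_rank_five :
    ∃ (pa : Fin 5 → Fin 5 → Polynomial ℤ)
      (pb : Fin 5 → Fin 4 → Polynomial ℤ)
      (pc : Fin 5 → Fin 4 → Polynomial ℤ)
      (P : S),
      (∀ l v, (pa l v).degree ≤ 2) ∧
      (∀ l v, (pb l v).degree ≤ 2) ∧
      (∀ l v, (pc l v).degree ≤ 2) ∧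
      (∑ l : Fin 5,
          (∑ v : Fin 5, emb (pa l v) * Polynomial.C (aVar v)) *
          (∑ v : Fin 4, emb (pb l v) * Polynomial.C (bVar v)) *
          (∑ v : Fin 4, emb (pc l v) * Polynomial.C (cVar v)))
        = Polynomial.X ^ 2 *
            Polynomial.C (a11 * b11 * c11 + a11 * b12 * c21 + a12 * b21 * c11
              + a13 * b31 * c11 + a22 * b21 * c12 + a23 * b31 * c12)
          + Polynomial.X ^ 3 * P := by
  refine ⟨![![1, X^2, 0, -X^2, 0],
            ![1 - X, 0, X^2, -X^2, 0],
            ![1, 0, 0, 0, 0],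
            ![1, 0, 0, -X^2, X^2],
            ![-1, 0, 0, X^2, 0]],
          ![![X, 0, 1, X],
            ![-X, 0, 0, 1],
            ![X, -X, 1, X],
            ![-X, X, 0, 1 - X],
            ![0, 0, 1, 1]],
          ![![1, 0, 0, 0],
            ![1, 0, -X, 0],
            ![0, 1 - X, -X, 0],
            ![0, 1 - X, 0, 0],
            ![1, 1 - X, -X, 0]],
          Polynomial.C (- a11 * b11 * c21 + a12 * b11 * c11 + a12 * b31 * c11
              - a13 * b11 * c11 - a13 * b31 * c21 + a22 * b11 * c12 - a22 * b12 * c12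
              - a22 * b21 * c12 - a22 * b21 * c21 - a22 * b31 * c11 + a22 * b31 * c12
              - a23 * b11 * c12 + a23 * b12 * c12 - 2 * a23 * b31 * c12)
            + Polynomial.C (a13 * b11 * c21 - a22 * b11 * c12 - a22 * b11 * c21
              + a22 * b12 * c12 - a22 * b31 * c12 + a23 * b11 * c12 - a23 * b12 * c12
              + a23 * b31 * c12) * Polynomial.X,
          ?_, ?_, ?_, ?_⟩
  · intro l v
    fin_cases l <;> fin_cases v <;>
      simp only [Matrix.cons_val_zero, Matrix.cons_val_one, Matrix.head_cons,
        Matrix.cons_val_two, Matrix.cons_val_three, Matrix.cons_val_four,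
        Matrix.tail_cons, Matrix.head_fin_const, Fin.isValue, Matrix.cons_val_fin_one] <;>
      first
        | (rw [Polynomial.degree_zero]; exact bot_le)
        | (exact aux_deg)
        | compute_degree!
  · intro l v
    fin_cases l <;> fin_cases v <;>
      simp only [Matrix.cons_val_zero, Matrix.cons_val_one, Matrix.head_cons,
        Matrix.cons_val_two, Matrix.cons_val_three, Matrix.cons_val_four,
        Matrix.tail_cons, Matrix.head_fin_const, Fin.isValue, Matrix.cons_val_fin_one] <;>
      first
        | (rw [Polynomial.degree_zero]; exact bot_le)
        | (exact aux_deg)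
        | compute_degree!
  · intro l v
    fin_cases l <;> fin_cases v <;>
      simp only [Matrix.cons_val_zero, Matrix.cons_val_one, Matrix.head_cons,
        Matrix.cons_val_two, Matrix.cons_val_three, Matrix.cons_val_four,
        Matrix.tail_cons, Matrix.head_fin_const, Fin.isValue, Matrix.cons_val_fin_one] <;>
      first
        | (rw [Polynomial.degree_zero]; exact bot_le)
        | (exact aux_deg)
        | compute_degree!
  · simp only [Fin.sum_univ_five, Fin.sum_univ_four,
      Matrix.cons_val_zero, Matrix.cons_val_one, Matrix.head_cons,
      Matrix.cons_val_two, Matrix.cons_val_three, Matrix.cons_val_four,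
      Matrix.tail_cons, Matrix.head_fin_const, Matrix.cons_val_fin_one, Fin.isValue,
      aVar, bVar, cVar, emb, Polynomial.map_sub, Polynomial.map_add, Polynomial.map_one,
      Polynomial.map_neg, Polynomial.map_pow, Polynomial.map_X, Polynomial.map_zero,
      Polynomial.map_ofNat, map_add, map_mul, map_sub, map_neg, map_ofNat]
    ring
end CoppersmithBase
end

section
/- Let F be a field and m, k, n, r ≥ 1. If there is a bilinear algorithm of rank r for (m,k,n) matrix multiplication over F, then there is a bilinear algorithm of rank r for (k,n,m) matrix multiplication over F. -/
/-- A bilinear algorithm of rank `r` for `(m,k,n)` matrix multiplication over `F`: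
coefficient families `α`, `β`, `γ` computing every entry of every matrix product
`A * B` via `r` bilinear products. -/
def IsBilinearAlg (F : Type*) [Field F] (m k n r : ℕ)
    (α : Fin r → Fin m → Fin k → F)
    (β : Fin r → Fin k → Fin n → F)
    (γ : Fin r → Fin n → Fin m → F) : Prop :=
  ∀ (A : Matrix (Fin m) (Fin k) F) (B : Matrix (Fin k) (Fin n) F)
    (i : Fin m) (j : Fin n),
    (A * B) i j =
      ∑ l : Fin r, γ l j i *
        (∑ p : Fin m, ∑ q : Fin k, α l p q * A p q) *
        (∑ q : Fin k, ∑ p' : Fin n, β l q p' * B q p')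

/-- There exists a bilinear algorithm of rank `r` for `(m,k,n)` matrix multiplication. -/
def HasBilinearAlg (F : Type*) [Field F] (m k n r : ℕ) : Prop :=
  ∃ α β γ, IsBilinearAlg F m k n r α β γ


private lemma sum_rotate5 {M : Type*} [AddCommMonoid M] {A B C D E : Type*}
    [Fintype A] [Fintype B] [Fintype C] [Fintype D] [Fintype E]
    (f : A → B → C → D → E → M) :
    (∑ a, ∑ b, ∑ c, ∑ d, ∑ e, f a b c d e)
      = ∑ b, ∑ c, ∑ d, ∑ e, ∑ a, f a b c d e :=
  Finset.sum_comm.trans (Finset.sum_congr rfl fun _ _ =>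
    Finset.sum_comm.trans (Finset.sum_congr rfl fun _ _ =>
      Finset.sum_comm.trans (Finset.sum_congr rfl fun _ _ => Finset.sum_comm)))

private lemma bilinear_key {F : Type*} [Field F] {m k n r : ℕ}
    {α : Fin r → Fin m → Fin k → F}
    {β : Fin r → Fin k → Fin n → F}
    {γ : Fin r → Fin n → Fin m → F}
    (h : IsBilinearAlg F m k n r α β γ)
    (i : Fin m) (j : Fin n) (a : Fin m) (b c : Fin k) (d : Fin n) :
    (∑ l : Fin r, γ l j i * α l a b * β l c d)
      = if a = i ∧ b = c ∧ d = j then 1 else 0 := by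
  classical
  have H := h (Matrix.single a b 1) (Matrix.single c d 1) i j
  simp [Matrix.mul_apply, Matrix.single, ite_and, mul_ite, mul_one, mul_zero,
    Finset.sum_ite_eq, Finset.sum_ite_eq'] at H
  rw [← H]
  by_cases h1 : a = i <;> by_cases h2 : b = c <;> by_cases h3 : d = j <;>
    simp [h1, h2, h3, eq_comm]

/-- cyclic symmetry of bilinear matrix-multiplication algorithms:
rank-r algorithm for (m,k,n) yields one for (k,n,m). -/
theorem bilinearAlg_cyclic (F : Type*) [Field F] (m k n r : ℕ)
    (hm : 1 ≤ m) (hk : 1 ≤ k) (hn : 1 ≤ n) (hr : 1 ≤ r)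
    (h : HasBilinearAlg F m k n r) : HasBilinearAlg F k n m r := by
  obtain ⟨α, β, γ, halg⟩ := h
  refine ⟨β, γ, α, ?_⟩
  intro X Y i j
  classical
  have key := fun (p : Fin k) (q q' : Fin n) (p' : Fin m) =>
    bilinear_key halg p' q' j i p q
  have expand :
      (∑ l : Fin r, α l j i *
        (∑ p : Fin k, ∑ q : Fin n, β l p q * X p q) *
        (∑ q : Fin n, ∑ p' : Fin m, γ l q p' * Y q p'))
      = ∑ q' : Fin n, ∑ p' : Fin m, ∑ p : Fin k, ∑ q : Fin n, ∑ l : Fin r,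
          α l j i * (β l p q * X p q) * (γ l q' p' * Y q' p') := by
    simp only [Finset.mul_sum, Finset.sum_mul]
    exact sum_rotate5 _
  have step : ∀ (q' : Fin n) (p' : Fin m) (p : Fin k) (q : Fin n),
      (∑ l : Fin r, α l j i * (β l p q * X p q) * (γ l q' p' * Y q' p'))
        = (if j = p' ∧ i = p ∧ q = q' then 1 else 0) * (X p q * Y q' p') := by
    intro q' p' p q
    rw [← key p q q' p', Finset.sum_mul]
    exact Finset.sum_congr rfl fun l _ => by ring
  rw [expand]
  simp only [step, ite_mul, one_mul, zero_mul, ite_and]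
  simp [Matrix.mul_apply, Finset.sum_ite_eq, Finset.sum_ite_eq']
end

section
/- Let F be a field and m, k, n, r ≥ 1. If there is a bilinear algorithm of rank r for (m,k,n) matrix multiplication over F, then there is a bilinear algorithm of rank r for (n,k,m) matrix multiplication over F. -/
/-- transpose symmetry of bilinear matrix-multiplication algorithms:
rank-r algorithm for (m,k,n) yields one for (n,k,m). -/
theorem bilinearAlg_transpose (F : Type*) [Field F] (m k n r : ℕ)
    (hm : 1 ≤ m) (hk : 1 ≤ k) (hn : 1 ≤ n) (hr : 1 ≤ r)
    (h : HasBilinearAlg F m k n r) : HasBilinearAlg F n k m r := by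
  obtain ⟨α, β, γ, hh⟩ := h
  refine ⟨fun l p q => β l q p, fun l q p => α l p q, fun l j i => γ l i j, ?_⟩
  intro A B i j
  have key := hh B.transpose A.transpose j i
  have hAB : (A * B) i j = (B.transpose * A.transpose) j i := by
    simp [Matrix.mul_apply, Matrix.transpose_apply, mul_comm]
  rw [hAB, key]
  refine Finset.sum_congr rfl fun l _ => ?_
  rw [Finset.sum_comm (f := fun p q => β l q p * A p q),
      Finset.sum_comm (f := fun q p => α l p q * B q p)]
  simp only [Matrix.transpose_apply]
  ring
end

section
/- Let F be a field, and suppose there is a bilinear algorithm of rank r₁ for (m₁,k₁,n₁) matrix multiplication over F and a bilinear algorithm of rank r₂ for (m₂,k₂,n₂) matrix multiplication over F. Then there is a bilinear algorithm of rank r₁·r₂ for (m₁·m₂, k₁·k₂, n₁·n₂) matrix multiplication over F. -/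
lemma sum_comm3 {F : Type*} [AddCommMonoid F] {ι κ μ : Type*} [Fintype ι] [Fintype κ] [Fintype μ]
    (f : ι → κ → μ → F) :
    ∑ l, ∑ x, ∑ y, f l x y = ∑ x, ∑ y, ∑ l, f l x y := by
  rw [Finset.sum_comm]
  exact Finset.sum_congr rfl fun x _ => Finset.sum_comm

theorem isBilinearAlg_iff (F : Type*) [Field F] (m k n r : ℕ)
    (α : Fin r → Fin m → Fin k → F)
    (β : Fin r → Fin k → Fin n → F)
    (γ : Fin r → Fin n → Fin m → F) :
    IsBilinearAlg F m k n r α β γ ↔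
    ∀ (i : Fin m) (j : Fin n) (p : Fin m) (q q' : Fin k) (j' : Fin n),
      (∑ l : Fin r, γ l j i * α l p q * β l q' j') =
        (if p = i ∧ q = q' ∧ j' = j then (1 : F) else 0) := by
  constructor
  · intro h i j p q q' j'
    have := h (Matrix.single p q 1) (Matrix.single q' j' 1) i j
    simp [Matrix.mul_apply, Matrix.single, ite_and, mul_ite, Finset.sum_ite_eq,
      Finset.sum_ite_eq'] at this ⊢
    rw [← this]
    split_ifs <;> simp_all
  · intro h A B i j
    rw [Matrix.mul_apply]
    have expand :
        (∑ l : Fin r, γ l j i *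
          (∑ p : Fin m, ∑ q : Fin k, α l p q * A p q) *
          (∑ q : Fin k, ∑ p' : Fin n, β l q p' * B q p'))
        = ∑ l : Fin r, ∑ x : Fin m × Fin k, ∑ y : Fin k × Fin n,
            γ l j i * (α l x.1 x.2 * A x.1 x.2) * (β l y.1 y.2 * B y.1 y.2) := by
      refine Finset.sum_congr rfl fun l _ => ?_
      rw [show (∑ p : Fin m, ∑ q : Fin k, α l p q * A p q)
          = ∑ x : Fin m × Fin k, α l x.1 x.2 * A x.1 x.2 from (Fintype.sum_prod_type (fun x : Fin m × Fin k => α l x.1 x.2 * A x.1 x.2)).symm,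
        show (∑ q : Fin k, ∑ p' : Fin n, β l q p' * B q p')
          = ∑ y : Fin k × Fin n, β l y.1 y.2 * B y.1 y.2 from (Fintype.sum_prod_type (fun y : Fin k × Fin n => β l y.1 y.2 * B y.1 y.2)).symm,
        mul_assoc, Finset.sum_mul_sum, Finset.mul_sum]
      refine Finset.sum_congr rfl fun x _ => ?_
      rw [Finset.mul_sum]
      refine Finset.sum_congr rfl fun y _ => ?_
      ring
    rw [expand, sum_comm3]
    have step : ∀ (x : Fin m × Fin k) (y : Fin k × Fin n),
        (∑ l : Fin r, γ l j i * (α l x.1 x.2 * A x.1 x.2) * (β l y.1 y.2 * B y.1 y.2))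
        = (if x.1 = i ∧ x.2 = y.1 ∧ y.2 = j then (1:F) else 0) * (A x.1 x.2 * B y.1 y.2) := by
      intro x y
      rw [← h i j x.1 x.2 y.1 y.2, Finset.sum_mul]
      exact Finset.sum_congr rfl fun l _ => by ring
    simp only [step]
    simp [Fintype.sum_prod_type, ite_and, Finset.sum_ite_eq, Finset.sum_ite_eq',
      mul_comm]

/-- tensoring of bilinear matrix-multiplication algorithms. -/
theorem bilinearAlg_tensor (F : Type*) [Field F]
    (m₁ k₁ n₁ r₁ m₂ k₂ n₂ r₂ : ℕ)
    (h₁ : HasBilinearAlg F m₁ k₁ n₁ r₁)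
    (h₂ : HasBilinearAlg F m₂ k₂ n₂ r₂) :
    HasBilinearAlg F (m₁ * m₂) (k₁ * k₂) (n₁ * n₂) (r₁ * r₂) := by
  obtain ⟨α₁, β₁, γ₁, H₁⟩ := h₁
  obtain ⟨α₂, β₂, γ₂, H₂⟩ := h₂
  rw [isBilinearAlg_iff] at H₁ H₂
  refine ⟨fun l p q => α₁ (finProdFinEquiv.symm l).1 (finProdFinEquiv.symm p).1
        (finProdFinEquiv.symm q).1 *
      α₂ (finProdFinEquiv.symm l).2 (finProdFinEquiv.symm p).2 (finProdFinEquiv.symm q).2,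
    fun l q j => β₁ (finProdFinEquiv.symm l).1 (finProdFinEquiv.symm q).1
        (finProdFinEquiv.symm j).1 *
      β₂ (finProdFinEquiv.symm l).2 (finProdFinEquiv.symm q).2 (finProdFinEquiv.symm j).2,
    fun l j i => γ₁ (finProdFinEquiv.symm l).1 (finProdFinEquiv.symm j).1
        (finProdFinEquiv.symm i).1 *
      γ₂ (finProdFinEquiv.symm l).2 (finProdFinEquiv.symm j).2 (finProdFinEquiv.symm i).2, ?_⟩
  rw [isBilinearAlg_iff]
  intro i j p q q' j'
  rw [← Equiv.sum_comp finProdFinEquiv]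
  simp only [Equiv.symm_apply_apply]
  rw [Fintype.sum_prod_type]
  have factor :
      (∑ l₁ : Fin r₁, ∑ l₂ : Fin r₂,
        γ₁ l₁ (finProdFinEquiv.symm j).1 (finProdFinEquiv.symm i).1 *
          γ₂ l₂ (finProdFinEquiv.symm j).2 (finProdFinEquiv.symm i).2 *
          (α₁ l₁ (finProdFinEquiv.symm p).1 (finProdFinEquiv.symm q).1 *
            α₂ l₂ (finProdFinEquiv.symm p).2 (finProdFinEquiv.symm q).2) *
          (β₁ l₁ (finProdFinEquiv.symm q').1 (finProdFinEquiv.symm j').1 *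
            β₂ l₂ (finProdFinEquiv.symm q').2 (finProdFinEquiv.symm j').2))
      = (∑ l₁ : Fin r₁, γ₁ l₁ (finProdFinEquiv.symm j).1 (finProdFinEquiv.symm i).1 *
            α₁ l₁ (finProdFinEquiv.symm p).1 (finProdFinEquiv.symm q).1 *
            β₁ l₁ (finProdFinEquiv.symm q').1 (finProdFinEquiv.symm j').1) *
        (∑ l₂ : Fin r₂, γ₂ l₂ (finProdFinEquiv.symm j).2 (finProdFinEquiv.symm i).2 *
            α₂ l₂ (finProdFinEquiv.symm p).2 (finProdFinEquiv.symm q).2 *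
            β₂ l₂ (finProdFinEquiv.symm q').2 (finProdFinEquiv.symm j').2) := by
    rw [Finset.sum_mul_sum]
    exact Finset.sum_congr rfl fun l₁ _ => Finset.sum_congr rfl fun l₂ _ => by ring
  rw [factor, H₁, H₂]
  have key : ∀ {a b : ℕ} (x y : Fin (a * b)),
      x = y ↔ (finProdFinEquiv.symm x).1 = (finProdFinEquiv.symm y).1 ∧
        (finProdFinEquiv.symm x).2 = (finProdFinEquiv.symm y).2 := by
    intro a b x y
    rw [← finProdFinEquiv.symm.apply_eq_iff_eq, Prod.ext_iff]
  simp only [key]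
  split_ifs <;> simp_all
end

section
/- Let F be a field, m, k, n, r ≥ 1, D, h ∈ ℕ, and suppose there are families α : Fin r → Fin m → Fin k → F[x], β : Fin r → Fin k → Fin n → F[x], γ : Fin r → Fin n → Fin m → F[x] with the following properties: for all matrices A : Matrix (Fin m) (Fin k) F, B : Matrix (Fin k) (Fin n) F, and indices i, j, the polynomial Q_{A,B,i,j}(x) = ∑ ℓ, (γ ℓ j i) * (∑ p q, (α ℓ p q) * C(A p q)) * (∑ q p', (β ℓ q p') * C(B q p')) (where C embeds F as constants in F[x]) has degree at most D, and its coefficient of x^h equals (A * B) i j while its coefficients of x^e for e < h vanish. If F has at least D + 1 elements, then there is a bilinear algorithm of rank r·(D+1) for (m,k,n) matrix multiplication over F. -/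
/-!
Evaluating the approximate algorithm at a point `x ∈ F` gives `r` bilinear products whose
combination is the polynomial entry `Q_{A,B,i,j}` evaluated at `x`. Since `Q_{A,B,i,j}` has
degree at most `D`, Lagrange interpolation at `D + 1` distinct nodes writes its coefficient of
`x ^ h`, which is `(A * B) i j`, as a fixed linear combination of these values; the
`r · (D + 1)` evaluated products therefore form an exact algorithm.
-/

open Polynomial

section BilinearEval

variable {R ι : Type*} [CommSemiring R] [Fintype ι] {m k n : ℕ}

/-- `IsBilinearAlg F m k n r α β γ` says `(A * B) i j = bilinearEval α β γ A B i j`, and the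
polynomial in the border-rank hypothesis is `bilinearEval α β γ (A.map C) (B.map C) i j`; both
identifications are definitional. -/
def bilinearEval (α : ι → Fin m → Fin k → R) (β : ι → Fin k → Fin n → R)
    (γ : ι → Fin n → Fin m → R) (A : Matrix (Fin m) (Fin k) R) (B : Matrix (Fin k) (Fin n) R)
    (i : Fin m) (j : Fin n) : R :=
  ∑ l, γ l j i * (∑ p, ∑ q, α l p q * A p q) * (∑ q, ∑ p', β l q p' * B q p')

theorem sum_mul_bilinearEval {κ : Type*} [Fintype κ] (w : κ → R)
    (α : κ → ι → Fin m → Fin k → R) (β : κ → ι → Fin k → Fin n → R)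
    (γ : κ → ι → Fin n → Fin m → R) (A : Matrix (Fin m) (Fin k) R)
    (B : Matrix (Fin k) (Fin n) R) (i : Fin m) (j : Fin n) :
    ∑ d, w d * bilinearEval (α d) (β d) (γ d) A B i j =
      bilinearEval (fun P : ι × κ => α P.2 P.1) (fun P => β P.2 P.1)
        (fun P j i => w P.2 * γ P.2 P.1 j i) A B i j := by
  conv_rhs => rw [bilinearEval, Fintype.sum_prod_type, Finset.sum_comm]
  refine Finset.sum_congr rfl fun d _ => ?_
  rw [bilinearEval, Finset.mul_sum]
  simp only [mul_assoc]

theorem eval_bilinearEval_map_C (x : R) (α : ι → Fin m → Fin k → R[X])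
    (β : ι → Fin k → Fin n → R[X]) (γ : ι → Fin n → Fin m → R[X])
    (A : Matrix (Fin m) (Fin k) R) (B : Matrix (Fin k) (Fin n) R) (i : Fin m) (j : Fin n) :
    (bilinearEval α β γ (A.map C) (B.map C) i j).eval x =
      bilinearEval (fun l p q => (α l p q).eval x) (fun l q p' => (β l q p').eval x)
        (fun l j i => (γ l j i).eval x) A B i j := by
  simp only [bilinearEval, eval_finsetSum, eval_mul, Matrix.map_apply, eval_C]

end BilinearEval

theorem hasBilinearAlg_of_equiv {F ι : Type*} [Field F] [Fintype ι] {m k n r : ℕ}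
    (e : ι ≃ Fin r) (α : ι → Fin m → Fin k → F) (β : ι → Fin k → Fin n → F)
    (γ : ι → Fin n → Fin m → F)
    (h : ∀ A B i j, (A * B) i j = bilinearEval α β γ A B i j) :
    HasBilinearAlg F m k n r :=
  ⟨fun l => α (e.symm l), fun l => β (e.symm l), fun l => γ (e.symm l), fun A B i j =>
    (h A B i j).trans (e.symm.sum_comp fun l => γ l j i * _ * _).symm⟩

theorem Polynomial.coeff_eq_sum_eval_mul_coeff_basis {F ι : Type*} [Field F] [DecidableEq ι]
    {s : Finset ι} {v : ι → F} (hv : Set.InjOn v s) {f : F[X]} (hf : f.degree < s.card)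
    (h : ℕ) : f.coeff h = ∑ i ∈ s, f.eval (v i) * (Lagrange.basis s v i).coeff h := by
  conv_lhs => rw [Lagrange.eq_interpolate hv hf, Lagrange.interpolate_apply, finsetSum_coeff]
  simp only [coeff_C_mul]

theorem borderRank_to_rank_general (F : Type*) [Field F] (m k n r D h : ℕ)
    (α : Fin r → Fin m → Fin k → Polynomial F)
    (β : Fin r → Fin k → Fin n → Polynomial F)
    (γ : Fin r → Fin n → Fin m → Polynomial F)
    (happrox : ∀ (A : Matrix (Fin m) (Fin k) F) (B : Matrix (Fin k) (Fin n) F)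
      (i : Fin m) (j : Fin n),
      (∑ l : Fin r, γ l j i *
          (∑ p : Fin m, ∑ q : Fin k, α l p q * Polynomial.C (A p q)) *
          (∑ q : Fin k, ∑ p' : Fin n, β l q p' * Polynomial.C (B q p'))).degree ≤ D ∧
      (∑ l : Fin r, γ l j i *
          (∑ p : Fin m, ∑ q : Fin k, α l p q * Polynomial.C (A p q)) *
          (∑ q : Fin k, ∑ p' : Fin n, β l q p' * Polynomial.C (B q p'))).coeff h
        = (A * B) i j ∧
      ∀ e : ℕ, e < h →
        (∑ l : Fin r, γ l j i *
            (∑ p : Fin m, ∑ q : Fin k, α l p q * Polynomial.C (A p q)) *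
            (∑ q : Fin k, ∑ p' : Fin n, β l q p' * Polynomial.C (B q p'))).coeff e = 0)
    (hF : ∃ s : Finset F, D + 1 ≤ s.card) :
    HasBilinearAlg F m k n (r * (D + 1)) := by
  obtain ⟨s, hs⟩ := hF
  let v : Fin (D + 1) ↪ F :=
    (Fin.castLEEmb hs).trans (s.equivFin.symm.toEmbedding.trans (.subtype _))
  have hv : Set.InjOn v (Finset.univ : Finset (Fin (D + 1))) := v.injective.injOn
  let w : Fin (D + 1) → F := fun d => (Lagrange.basis Finset.univ v d).coeff h
  refine hasBilinearAlg_of_equiv finProdFinEquiv (fun P p q => (α P.1 p q).eval (v P.2))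
    (fun P q p' => (β P.1 q p').eval (v P.2)) (fun P j i => w P.2 * (γ P.1 j i).eval (v P.2))
    fun A B i j => ?_
  obtain ⟨hdeg, hcoeff, -⟩ := happrox A B i j
  have hdeg' : (bilinearEval α β γ (A.map C) (B.map C) i j).degree <
      (Finset.univ : Finset (Fin (D + 1))).card := by
    rw [Finset.card_univ, Fintype.card_fin]
    exact hdeg.trans_lt (WithBot.coe_lt_coe.mpr D.lt_succ_self)
  calc (A * B) i j = (bilinearEval α β γ (A.map C) (B.map C) i j).coeff h := hcoeff.symm
    _ = ∑ d, w d * bilinearEval (fun l p q => (α l p q).eval (v d))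
          (fun l q p' => (β l q p').eval (v d)) (fun l j i => (γ l j i).eval (v d)) A B i j := by
      rw [coeff_eq_sum_eval_mul_coeff_basis hv hdeg']
      exact Finset.sum_congr rfl fun d _ => by rw [eval_bilinearEval_map_C, mul_comm]
    _ = _ := sum_mul_bilinearEval ..

/-- a border-rank-r (approximate, with error order `x^(h+1)` and degree
bound `D`) bilinear algorithm for (m,k,n) matrix multiplication over a field with at
least `D+1` elements yields an exact bilinear algorithm of rank `r·(D+1)`. -/
theorem borderRank_to_rank (F : Type*) [Field F] (m k n r D h : ℕ)
    (hm : 1 ≤ m) (hk : 1 ≤ k) (hn : 1 ≤ n) (hr : 1 ≤ r)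
    (α : Fin r → Fin m → Fin k → Polynomial F)
    (β : Fin r → Fin k → Fin n → Polynomial F)
    (γ : Fin r → Fin n → Fin m → Polynomial F)
    (happrox : ∀ (A : Matrix (Fin m) (Fin k) F) (B : Matrix (Fin k) (Fin n) F)
      (i : Fin m) (j : Fin n),
      (∑ l : Fin r, γ l j i *
          (∑ p : Fin m, ∑ q : Fin k, α l p q * Polynomial.C (A p q)) *
          (∑ q : Fin k, ∑ p' : Fin n, β l q p' * Polynomial.C (B q p'))).degree ≤ D ∧
      (∑ l : Fin r, γ l j i *
          (∑ p : Fin m, ∑ q : Fin k, α l p q * Polynomial.C (A p q)) *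
          (∑ q : Fin k, ∑ p' : Fin n, β l q p' * Polynomial.C (B q p'))).coeff h
        = (A * B) i j ∧
      ∀ e : ℕ, e < h →
        (∑ l : Fin r, γ l j i *
            (∑ p : Fin m, ∑ q : Fin k, α l p q * Polynomial.C (A p q)) *
            (∑ q : Fin k, ∑ p' : Fin n, β l q p' * Polynomial.C (B q p'))).coeff e = 0)
    (hF : ∃ s : Finset F, D + 1 ≤ s.card) :
    HasBilinearAlg F m k n (r * (D + 1)) :=
  borderRank_to_rank_general F m k n r D h α β γ happrox hF
end
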